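/- arXiv:0808.2152 — 2 statements merged into one kernel-verified Lean document; each statement's English description precedes it below -/
import Mathlib

section
/- Let Z := 1 − √(χ²(d)/d). Then E[Z] ≤ exp(−d/16) + √(π/(2d)). -/
open MeasureTheory ProbabilityTheory

/-- The chi-squared distribution with `d` degrees of freedom: the law of the sum of squares
of `d` i.i.d. standard Gaussian random variables. -/
noncomputable def chiSq (d : ℕ) : Measure ℝ :=
  (Measure.pi fun _ : Fin d => gaussianReal 0 1).map fun x => ∑ i, (x i) ^ 2

/-!
With `u = χ²(d)/d`, the identity `1 - √u = (1 - u)/2 + (1 - √u)²/2` together with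
`(1 - √u)² ≤ (1 - u)²` gives `E[1 - √u] ≤ E[(1 - u)²]/2 = Var[χ²(d)]/(2d²)`, because `E u = 1`.
The Gaussian fourth moment `3`, computed through the Gamma function, gives `Var[χ²(d)] = 2d`,
so `E[1 - √u] ≤ 1/d ≤ √(π/(2d))`.
-/

open Real

lemma Real.one_sub_div_two_le_one_sub_sqrt {u : ℝ} (hu : 0 ≤ u) : (1 - u) / 2 ≤ 1 - √u := by
  nlinarith [sq_sqrt hu, sq_nonneg (1 - √u)]

lemma Real.one_sub_sqrt_le {u : ℝ} (hu : 0 ≤ u) : 1 - √u ≤ (1 - u) / 2 + (1 - u) ^ 2 / 2 := by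
  have hs := sqrt_nonneg u
  nlinarith [sq_sqrt hu, mul_nonneg (mul_nonneg hs hs) (sq_nonneg (1 - √u)),
    mul_nonneg hs (sq_nonneg (1 - √u))]

lemma integral_one_sub_sqrt_div_le {μ : Measure ℝ} [IsProbabilityMeasure μ]
    (h_nonneg : ∀ᵐ y ∂μ, 0 ≤ y) (hμ : MemLp id 2 μ) {m : ℝ} (hmean : ∫ y, y ∂μ = m)
    (hm : 0 < m) :
    ∫ y, (1 - √(y / m)) ∂μ ≤ Var[id; μ] / (2 * m ^ 2) := by
  have h_int : Integrable (fun y ↦ y) μ := hμ.integrable one_le_two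
  have h_int_sq : Integrable (fun y ↦ (y - m) ^ 2) μ := (hμ.sub (memLp_const m)).integrable_sq
  have h_lin : Integrable (fun y ↦ 1 - y / m) μ := (integrable_const 1).sub (h_int.div_const m)
  have h_upper : Integrable (fun y ↦ (1 - y / m) / 2 + (y - m) ^ 2 / (2 * m ^ 2)) μ :=
    (h_lin.div_const 2).add (h_int_sq.div_const _)
  have h_var : Var[id; μ] = ∫ y, (y - m) ^ 2 ∂μ := by
    rw [variance_eq_integral measurable_id.aemeasurable]
    simp [hmean]
  have h_le : ∀ᵐ y ∂μ, 1 - √(y / m) ≤ (1 - y / m) / 2 + (y - m) ^ 2 / (2 * m ^ 2) := by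
    filter_upwards [h_nonneg] with y hy
    convert one_sub_sqrt_le (div_nonneg hy hm.le) using 2
    field_simp
    ring
  have h_ge : ∀ᵐ y ∂μ, (1 - y / m) / 2 ≤ 1 - √(y / m) := by
    filter_upwards [h_nonneg] with y hy
    exact one_sub_div_two_le_one_sub_sqrt (div_nonneg hy hm.le)
  have h_int_sqrt : Integrable (fun y ↦ 1 - √(y / m)) μ :=
    integrable_of_le_of_le (by fun_prop) h_ge h_le (h_lin.div_const 2) h_upper
  calc ∫ y, (1 - √(y / m)) ∂μ
      ≤ ∫ y, ((1 - y / m) / 2 + (y - m) ^ 2 / (2 * m ^ 2)) ∂μ :=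
        integral_mono_ae h_int_sqrt h_upper h_le
    _ = Var[id; μ] / (2 * m ^ 2) := by
      rw [integral_add (h_lin.div_const 2) (h_int_sq.div_const _), integral_div,
        integral_sub (integrable_const 1) (h_int.div_const m), integral_div, integral_div,
        hmean, ← h_var]
      simp [hm.ne']

lemma integral_abs_rpow_gaussianReal {p : ℝ} (hp : -1 < p) :
    ∫ x, |x| ^ p ∂gaussianReal 0 1 = 2 ^ (p / 2) * Gamma ((p + 1) / 2) / √π := by
  have hpdf (x : ℝ) : gaussianPDFReal 0 1 x • |x| ^ p
      = (√(2 * π))⁻¹ * (|x| ^ p * rexp (-(1 / 2) * |x| ^ (2 : ℝ))) := by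
    simp only [gaussianPDFReal, NNReal.coe_one, mul_one, sub_zero, smul_eq_mul, rpow_ofNat,
      sq_abs]
    ring_nf
  simp_rw [integral_gaussianReal_eq_integral_smul one_ne_zero, hpdf, integral_const_mul]
  rw [integral_comp_abs (f := fun t => t ^ p * rexp (-(1 / 2) * t ^ (2 : ℝ))),
    integral_rpow_mul_exp_neg_mul_rpow two_pos hp one_half_pos]
  have h_half : (1 / 2 : ℝ) ^ (-(p + 1) / 2) = 2 ^ (p / 2) * √2 := by
    rw [one_div, inv_rpow zero_le_two, ← rpow_neg zero_le_two, sqrt_eq_rpow,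
      ← rpow_add two_pos]
    ring_nf
  rw [h_half, sqrt_mul zero_le_two]
  field_simp

lemma integral_sq_gaussianReal : ∫ x, x ^ 2 ∂gaussianReal 0 1 = 1 := by
  have h := integral_abs_rpow_gaussianReal (p := 2) (by norm_num)
  have hΓ : Gamma ((2 + 1) / 2) = √π / 2 := by
    rw [show (2 + 1) / 2 = (1 / 2 : ℝ) + 1 by norm_num, Gamma_add_one (by norm_num),
      Gamma_one_half_eq]
    ring
  simp only [rpow_two, sq_abs] at h
  rw [h, hΓ]
  field_simp
  norm_num

lemma integral_pow_four_gaussianReal : ∫ x, x ^ 4 ∂gaussianReal 0 1 = 3 := by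
  have h4 (x : ℝ) : x ^ 4 = |x| ^ (4 : ℝ) := by
    rw [← (by decide : Even 4).pow_abs]
    norm_cast
  have hΓ : Gamma ((4 + 1) / 2) = 3 / 4 * √π := by
    rw [show (4 + 1) / 2 = (1 / 2 : ℝ) + 1 + 1 by norm_num, Gamma_add_one (by norm_num),
      Gamma_add_one (by norm_num), Gamma_one_half_eq]
    ring
  simp_rw [h4, integral_abs_rpow_gaussianReal (by norm_num : (-1 : ℝ) < 4), hΓ]
  field_simp
  norm_num

lemma memLp_two_sq_gaussianReal : MemLp (fun x ↦ x ^ 2) 2 (gaussianReal 0 1) := by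
  rw [memLp_two_iff_integrable_sq (by fun_prop)]
  simpa [← pow_mul, (by decide : Even 4).pow_abs] using
    (memLp_id_gaussianReal (μ := 0) (v := 1) 4).integrable_norm_pow (by norm_num)

lemma variance_sq_gaussianReal : Var[fun x ↦ x ^ 2; gaussianReal 0 1] = 2 := by
  rw [variance_eq_sub memLp_two_sq_gaussianReal]
  simp only [Pi.pow_apply, ← pow_mul]
  rw [integral_pow_four_gaussianReal, integral_sq_gaussianReal]
  norm_num

section ChiSq

variable (d : ℕ)

lemma measurable_sum_sq : Measurable fun x : Fin d → ℝ ↦ ∑ i, x i ^ 2 := by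
  fun_prop

instance : IsProbabilityMeasure (chiSq d) :=
  Measure.isProbabilityMeasure_map (measurable_sum_sq d).aemeasurable

lemma ae_nonneg_chiSq : ∀ᵐ y ∂chiSq d, 0 ≤ y :=
  (ae_map_iff (measurable_sum_sq d).aemeasurable measurableSet_Ici).2 <| ae_of_all _ fun _ ↦
    Finset.sum_nonneg fun _ _ ↦ sq_nonneg _

lemma memLp_id_chiSq : MemLp id 2 (chiSq d) := by
  rw [chiSq, memLp_map_measure_iff (by fun_prop) (measurable_sum_sq d).aemeasurable]
  convert memLp_finsetSum' Finset.univ fun i _ ↦ memLp_two_sq_gaussianReal.comp_measurePreserving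
    (measurePreserving_eval (fun _ : Fin d ↦ gaussianReal 0 1) i) using 1
  ext x
  simp

lemma integral_id_chiSq : ∫ y, y ∂chiSq d = d := by
  rw [chiSq, integral_map (measurable_sum_sq d).aemeasurable (by fun_prop),
    integral_finsetSum (f := fun (i : Fin d) (x : Fin d → ℝ) ↦ x i ^ 2) _ fun i _ ↦
      integrable_comp_eval (i := i) (f := fun x ↦ x ^ 2)
        (memLp_two_sq_gaussianReal.integrable one_le_two)]
  simp_rw [integral_comp_eval (μ := fun _ : Fin d ↦ gaussianReal 0 1) (f := fun x ↦ x ^ 2)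
    (by fun_prop), integral_sq_gaussianReal]
  simp

lemma variance_id_chiSq : Var[id; chiSq d] = 2 * d := by
  rw [chiSq, variance_id_map (measurable_sum_sq d).aemeasurable]
  have h := variance_sum_pi (μ := fun _ : Fin d ↦ gaussianReal 0 1) (X := fun _ x ↦ x ^ 2)
    fun _ ↦ memLp_two_sq_gaussianReal
  simp only [variance_sq_gaussianReal] at h
  convert h using 2
  · ext x
    simp
  · simp only [Finset.sum_const, Finset.card_univ, Fintype.card_fin, nsmul_eq_mul]
    ring

end ChiSq

/-- Let `Z := 1 − √(χ²(d)/d)`.  Then `E[Z] ≤ exp(−d/16) + √(π/(2d))`. -/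
theorem chiSq_expectation_one_sub_sqrt (d : ℕ) (hd : 1 ≤ d) :
    ∫ y, (1 - Real.sqrt (y / d)) ∂(chiSq d) ≤
      Real.exp (-(d : ℝ) / 16) + Real.sqrt (Real.pi / (2 * d)) := by
  have hd_pos : (0 : ℝ) < d := by exact_mod_cast hd
  calc ∫ y, (1 - √(y / d)) ∂chiSq d
      ≤ Var[id; chiSq d] / (2 * d ^ 2) :=
        integral_one_sub_sqrt_div_le (ae_nonneg_chiSq d) (memLp_id_chiSq d)
          (integral_id_chiSq d) hd_pos
    _ = 1 / d := by
      rw [variance_id_chiSq]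
      field_simp
    _ ≤ √(π / (2 * d)) := by
      rw [le_sqrt (by positivity) (by positivity), le_div_iff₀ (by positivity)]
      have hd_one : (1 : ℝ) ≤ d := by exact_mod_cast hd
      field_simp
      nlinarith [pi_gt_three]
    _ ≤ rexp (-d / 16) + √(π / (2 * d)) := le_add_of_nonneg_left (exp_pos _).le
end

section
/- Let p ≥ 1 be an odd integer and t > 0. The p×p symmetric circulant matrix Ψ with entries Ψ[i,j] = (1 + |i−j|_p)^{−t}, where |i−j|_p := min(|i−j|, p−|i−j|), is positive semidefinite. -/
/-- The toroidal distance `|i−j|_p := min(|i−j|, p−|i−j|)` on the discrete torus with `p`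
points. -/
def toroidalDist {p : ℕ} (i j : Fin p) : ℕ :=
  min ((i : ℤ) - (j : ℤ)).natAbs (p - ((i : ℤ) - (j : ℤ)).natAbs)

/-!
By the Gamma-function integral, `(1 + d)^{-t}` is an average over `s > 0` of `e^{-s d}` against
the positive weight `s^{t-1} e^{-s} / Γ(t)`, so it suffices to show that each matrix
`e^{-s |i-j|_p}` is positive semidefinite. For `p = 2m + 1`, let `A_k = {k, k+1, …, k+m-1}` be the
arcs of length `m`. Then `i` and `j` are separated by exactly `2 |i-j|_p` of the `p` arcs, so
`e^{-s |i-j|_p} = ∏_k c_k(i, j)` where `c_k(i, j)` is `1` if `A_k` does not separate `i` and `j`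
and `e^{-s/2}` otherwise. Each factor is positive semidefinite, being pulled back from the matrix
`c J + (1 - c) I` on `Bool`, and the Schur product theorem finishes the argument.
-/

open Finset Matrix MeasureTheory Real
open scoped ComplexOrder

namespace Matrix

lemma posSemidef_ite_eq {α : Type*} [Fintype α] [DecidableEq α] {c : ℝ}
    (hc0 : 0 ≤ c) (hc1 : c ≤ 1) :
    (of fun a b : α => if a = b then 1 else c).PosSemidef := by
  have h : (of fun a b : α => if a = b then 1 else c)
      = c • vecMulVec 1 (star 1) + (1 - c) • (1 : Matrix α α ℝ) := by
    ext a b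
    by_cases hab : a = b <;> simp [hab]
  rw [h]
  exact ((posSemidef_vecMulVec_self_star 1).smul hc0).add (PosSemidef.one.smul (by linarith))

lemma posSemidef_prod_hadamard {ι n 𝕜 : Type*} [Fintype n] [RCLike 𝕜] (s : Finset ι)
    {A : ι → Matrix n n 𝕜} (hA : ∀ k ∈ s, (A k).PosSemidef) :
    (of fun i j => ∏ k ∈ s, A k i j).PosSemidef := by
  classical
  induction s using Finset.induction_on with
  | empty =>
    have h : (of fun _ _ : n => (1 : 𝕜)) = vecMulVec 1 (star 1) := by ext; simp
    simpa [h] using posSemidef_vecMulVec_self_star (1 : n → 𝕜)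
  | insert k s hk ih =>
    have h : (of fun i j => ∏ k ∈ insert k s, A k i j)
        = A k ⊙ of fun i j => ∏ k ∈ s, A k i j := by
      ext i j
      simp [prod_insert hk]
    rw [h]
    exact (hA k (mem_insert_self k s)).hadamard (ih fun k' hk' => hA k' (mem_insert_of_mem hk'))

lemma posSemidef_pow_card_ne {n ι α : Type*} [Fintype n] [Fintype ι] [Fintype α] [DecidableEq α]
    (χ : n → ι → α) {c : ℝ} (hc0 : 0 ≤ c) (hc1 : c ≤ 1) :
    (of fun i j => c ^ #{k | χ i k ≠ χ j k}).PosSemidef := by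
  have h (k : ι) : (of fun i j => if χ i k = χ j k then 1 else c).PosSemidef :=
    (posSemidef_ite_eq hc0 hc1).submatrix (χ · k)
  have hprod : (of fun i j => c ^ #{k | χ i k ≠ χ j k})
      = of fun i j => ∏ k, (of fun i j => if χ i k = χ j k then 1 else c) i j := by
    ext i j
    simp [prod_ite, prod_const]
  rw [hprod]
  exact posSemidef_prod_hadamard univ fun k _ => h k

lemma posSemidef_integral {X n 𝕜 : Type*} [Fintype n] [RCLike 𝕜] [MeasurableSpace X]
    {μ : Measure X} {A : X → Matrix n n 𝕜} (hint : ∀ i j, Integrable (fun x => A x i j) μ)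
    (hA : ∀ᵐ x ∂μ, (A x).PosSemidef) :
    (of fun i j => ∫ x, A x i j ∂μ).PosSemidef := by
  refine PosSemidef.of_dotProduct_mulVec_nonneg ?_ fun v => ?_
  · ext i j
    simp only [conjTranspose_apply, of_apply]
    rw [RCLike.star_def, ← integral_conj]
    exact integral_congr_ae (hA.mono fun x hx => congrFun (congrFun hx.1 i) j)
  · have h : star v ⬝ᵥ (of (fun i j => ∫ x, A x i j ∂μ) *ᵥ v)
        = ∫ x, star v ⬝ᵥ (A x *ᵥ v) ∂μ := by
      simp only [dotProduct, mulVec, of_apply, Finset.mul_sum]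
      rw [integral_finsetSum _ fun i _ => integrable_finsetSum _ fun j _ =>
        ((hint i j).mul_const _).const_mul _]
      refine sum_congr rfl fun i _ => ?_
      rw [integral_finsetSum _ fun j _ => ((hint i j).mul_const _).const_mul _]
      simp only [integral_const_mul, integral_mul_const]
    rw [h]
    exact integral_nonneg_of_ae (hA.mono fun x hx => hx.dotProduct_mulVec_nonneg v)

end Matrix

lemma toroidalDist_eq_min_val_sub {p : ℕ} (i j : Fin p) :
    toroidalDist i j = min (i - j : Fin p).val (p - (i - j : Fin p).val) := by
  unfold toroidalDist
  rcases le_or_gt j i with hji | hij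
  · rw [Fin.sub_val_of_le hji]
    omega
  · rw [Fin.coe_sub_iff_lt.mpr hij]
    omega

lemma card_filter_add_val_lt_iff (m : ℕ) (a : Fin (2 * m + 1)) :
    #{u : Fin (2 * m + 1) | ¬(((u + a : Fin _) : ℕ) < m ↔ (u : ℕ) < m)}
      = 2 * min (a : ℕ) (2 * m + 1 - a) := by
  have ha := a.isLt
  have hrange : #{u : Fin (2 * m + 1) | ¬(((u + a : Fin _) : ℕ) < m ↔ (u : ℕ) < m)}
      = #{u ∈ range (2 * m + 1) |
          ¬((if 2 * m + 1 ≤ u + a then u + a - (2 * m + 1) else u + a) < m ↔ u < m)} := by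
    simp only [Fin.val_add_eq_ite, card_filter]
    exact Fin.sum_univ_eq_sum_range (fun u => if ¬((if 2 * m + 1 ≤ u + a
      then u + a - (2 * m + 1) else u + a) < m ↔ u < m) then 1 else 0) _
  rw [hrange]
  rcases le_or_gt (a : ℕ) m with ham | ham
  · have h : {u ∈ range (2 * m + 1) |
          ¬((if 2 * m + 1 ≤ u + a then u + a - (2 * m + 1) else u + a) < m ↔ u < m)}
        = Ico (m - a) m ∪ Ico (2 * m + 1 - a) (2 * m + 1) := by
      ext u
      simp only [mem_filter, mem_range, mem_union, mem_Ico]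
      split_ifs <;> omega
    rw [h, card_union_of_disjoint (disjoint_left.2 fun u hu hu' => by simp at hu hu'; omega)]
    simp only [Nat.card_Ico]
    omega
  · have h : {u ∈ range (2 * m + 1) |
          ¬((if 2 * m + 1 ≤ u + a then u + a - (2 * m + 1) else u + a) < m ↔ u < m)}
        = Ico 0 (2 * m + 1 - a) ∪ Ico m (3 * m + 1 - a) := by
      ext u
      simp only [mem_filter, mem_range, mem_union, mem_Ico]
      split_ifs <;> omega
    rw [h, card_union_of_disjoint (disjoint_left.2 fun u hu hu' => by simp at hu hu'; omega)]
    simp only [Nat.card_Ico]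
    omega

lemma card_filter_sub_val_lt_iff (m : ℕ) (i j : Fin (2 * m + 1)) :
    #{k : Fin (2 * m + 1) | ¬(((i - k : Fin _) : ℕ) < m ↔ ((j - k : Fin _) : ℕ) < m)}
      = 2 * toroidalDist i j := by
  rw [toroidalDist_eq_min_val_sub, ← card_filter_add_val_lt_iff]
  refine card_equiv (Equiv.subLeft j) fun k => ?_
  simp only [mem_filter, mem_univ, true_and, Equiv.subLeft_apply, sub_add_sub_cancel']

lemma posSemidef_exp_neg_mul_toroidalDist (m : ℕ) {s : ℝ} (hs : 0 ≤ s) :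
    (of fun i j : Fin (2 * m + 1) => exp (-(s * toroidalDist i j))).PosSemidef := by
  convert posSemidef_pow_card_ne (fun i k : Fin (2 * m + 1) => decide (((i - k : Fin _) : ℕ) < m))
    (exp_nonneg (-(s / 2))) (exp_le_one_iff.2 (by linarith)) using 1
  ext i j
  simp only [of_apply, ne_eq, decide_eq_decide, card_filter_sub_val_lt_iff, ← exp_nat_mul]
  push_cast
  ring_nf

lemma rpow_neg_eq_inv_Gamma_mul_integral {t b : ℝ} (ht : 0 < t) (hb : 0 < b) :
    b ^ (-t) = (Gamma t)⁻¹ * ∫ s in Set.Ioi 0, s ^ (t - 1) * exp (-(b * s)) := by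
  rw [integral_rpow_mul_exp_neg_mul_Ioi ht hb, one_div, inv_rpow hb.le, ← rpow_neg hb.le]
  field_simp [(Gamma_pos_of_pos ht).ne']

lemma integrableOn_rpow_sub_one_mul_exp_neg_mul {t b : ℝ} (ht : 0 < t) (hb : 0 < b) :
    IntegrableOn (fun s : ℝ => s ^ (t - 1) * exp (-(b * s))) (Set.Ioi 0) := by
  simpa only [rpow_one, neg_mul] using
    integrableOn_rpow_mul_exp_neg_mul_rpow (by linarith) one_pos hb (s := t - 1)

theorem posSemidef_polynomial_toroidal_general (p : ℕ) (hodd : Odd p)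
    (t : ℝ) (ht : 0 < t) :
    (Matrix.of fun i j : Fin p =>
      (1 + (toroidalDist i j : ℝ)) ^ (-t)).PosSemidef := by
  obtain ⟨m, rfl⟩ := hodd
  have hint (i j : Fin (2 * m + 1)) :=
    integrableOn_rpow_sub_one_mul_exp_neg_mul ht (by positivity : (0 : ℝ) < 1 + toroidalDist i j)
  have hpsd : ∀ s ∈ Set.Ioi (0 : ℝ), (of fun i j : Fin (2 * m + 1) =>
      s ^ (t - 1) * exp (-((1 + toroidalDist i j) * s))).PosSemidef := by
    intro s hs
    have h : (of fun i j : Fin (2 * m + 1) => s ^ (t - 1) * exp (-((1 + toroidalDist i j) * s)))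
        = (s ^ (t - 1) * exp (-s)) • of fun i j => exp (-(s * toroidalDist i j)) := by
      ext i j
      simp only [of_apply, Matrix.smul_apply, smul_eq_mul, mul_assoc, ← exp_add]
      ring_nf
    rw [h]
    exact (posSemidef_exp_neg_mul_toroidalDist m (le_of_lt hs)).smul
      (mul_nonneg (rpow_nonneg (le_of_lt hs) (t - 1)) (exp_nonneg (-s)))
  have hrep : (of fun i j : Fin (2 * m + 1) => (1 + (toroidalDist i j : ℝ)) ^ (-t))
      = (Gamma t)⁻¹ • of fun i j =>
          ∫ s in Set.Ioi 0, s ^ (t - 1) * exp (-((1 + toroidalDist i j) * s)) := by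
    ext i j
    exact rpow_neg_eq_inv_Gamma_mul_integral ht (by positivity)
  rw [hrep]
  exact (posSemidef_integral hint ((ae_restrict_iff' measurableSet_Ioi).2
    (ae_of_all _ hpsd))).smul (inv_nonneg.2 (Gamma_pos_of_pos ht).le)

/-- For odd `p ≥ 1` and `t > 0`, the `p × p` symmetric circulant matrix with entries
`(1 + |i−j|_p)^{−t}`, where `|i−j|_p` is the toroidal distance, is positive semidefinite. -/
theorem posSemidef_polynomial_toroidal (p : ℕ) (hp : 1 ≤ p) (hodd : Odd p)
    (t : ℝ) (ht : 0 < t) :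
    (Matrix.of fun i j : Fin p =>
      (1 + (toroidalDist i j : ℝ)) ^ (-t)).PosSemidef :=
  posSemidef_polynomial_toroidal_general p hodd t ht
end
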